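/- arXiv:1608.01803 — 2 statements merged into one kernel-verified Lean document; each statement's English description precedes it below -/
import Mathlib

section
/- Let μ₀ = μ₁ + μ₂ with Σ_{j=0}^∞ ‖p_j(μ₁,·)‖²_{L²(μ₂)} < ∞. Fix ε_m := Σ_{j=m}^∞ ‖p_j(μ₁,·)‖²_{L²(μ₂)}, and suppose z ∈ ℂ and n > m are such that Σ_{j=m}^n |p_j(μ₁, z)|² > M > 0. Then λ_n(μ₁, z) ≤ λ_n(μ₀, z) ≤ λ_n(μ₁, z) · (1 + ε_m + ((1+ε_m)/M) Σ_{j=0}^{m−1} |p_j(μ₁, z)|²). -/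
open MeasureTheory Polynomial Filter

noncomputable section

/-- The (closed) support of a Borel measure on `ℂ`. -/
def msupp (μ : Measure ℂ) : Set ℂ := {z | ∀ U ∈ nhds z, μ U ≠ 0}

/-- `p` is the sequence of orthonormal polynomials for `μ`:
`p n` has degree `n`, positive (real) leading coefficient, and
`⟪p m, p n⟫_μ = δ_{m n}`. -/
def ONP (μ : Measure ℂ) (p : ℕ → Polynomial ℂ) : Prop :=
  (∀ n, (p n).natDegree = n) ∧
  (∀ n, 0 < ((p n).leadingCoeff).re ∧ ((p n).leadingCoeff).im = 0) ∧
  (∀ m n, ∫ z, (p m).eval z * (starRingEnd ℂ) ((p n).eval z) ∂μ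
      = if m = n then 1 else 0)

/-- The `n`-th Christoffel function of the measure `μ` at the point `z`. -/
def christoffel (μ : Measure ℂ) (n : ℕ) (z : ℂ) : ℝ :=
  sInf {r : ℝ | ∃ P : Polynomial ℂ, P.natDegree ≤ n ∧ P.eval z = 1 ∧
      r = ∫ t, ‖P.eval t‖ ^ 2 ∂μ}

/-! Write `K_s(t, z) = ∑_{j ∈ s} p_j(t) conj (p_j(z))` for the partial reproducing kernel of `μ₁`.
Expanding a competitor `P` of degree `≤ n` in the orthonormal basis and applying Cauchy–Schwarz at
`z` gives `λ_n(μ₁, z) ≥ 1 / K_{[0,n]}(z, z)`. For the upper bound, the normalized kernel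
`Q = K_{[m,n]}(·, z) / K_{[m,n]}(z, z)` has `‖Q‖²_{μ₁} = 1 / K_{[m,n]}(z, z)`, and pointwise
Cauchy–Schwarz gives `|Q(t)|² ≤ K_{[m,n]}(t, t) / K_{[m,n]}(z, z)`, whence
`‖Q‖²_{μ₂} ≤ ε_m / K_{[m,n]}(z, z)`. Splitting `K_{[0,n]} = K_{[0,m)} + K_{[m,n]}` and using
`K_{[m,n]}(z, z) > M` compares the two bounds. -/

lemma msupp_eq_support (μ : Measure ℂ) : msupp μ = μ.support := by
  ext z
  simp [msupp, Measure.mem_support_iff_forall, pos_iff_ne_zero]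

lemma isCompact_msupp_of_le {μ ν : Measure ℂ} (hν : IsCompact (msupp ν)) (hμν : μ ≤ ν) :
    IsCompact (msupp μ) := by
  rw [msupp_eq_support] at hν ⊢
  exact hν.of_isClosed_subset Measure.isClosed_support (Measure.support_mono hμν)

lemma Continuous.integrable_of_isCompact_msupp {E : Type*} [NormedAddCommGroup E]
    {μ : Measure ℂ} [IsFiniteMeasureOnCompacts μ] (hμ : IsCompact (msupp μ)) {f : ℂ → E}
    (hf : Continuous f) : Integrable f μ := by
  rw [msupp_eq_support] at hμ
  rw [← Measure.restrict_eq_self_of_ae_mem (Measure.support_mem_ae (μ := μ))]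
  exact hf.continuousOn.integrableOn_compact hμ

lemma norm_sum_mul_sq_le {ι R : Type*} [SeminormedRing R] (s : Finset ι) (c w : ι → R) :
    ‖∑ i ∈ s, c i * w i‖ ^ 2 ≤ (∑ i ∈ s, ‖c i‖ ^ 2) * ∑ i ∈ s, ‖w i‖ ^ 2 :=
  calc ‖∑ i ∈ s, c i * w i‖ ^ 2 ≤ (∑ i ∈ s, ‖c i‖ * ‖w i‖) ^ 2 := by
        gcongr
        exact (norm_sum_le _ _).trans (Finset.sum_le_sum fun i _ => norm_mul_le _ _)
    _ ≤ _ := Finset.sum_mul_sq_le_sq_mul_sq s _ _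

lemma div_le_inv_add_mul_of_lt {A S M c : ℝ} (hA : 0 ≤ A) (hc : 0 ≤ c) (hM : 0 < M)
    (hMS : M < S) : c / S ≤ (A + S)⁻¹ * (c + c / M * A) := by
  have hS : 0 < S := hM.trans hMS
  have hgap : (A + S)⁻¹ * (c + c / M * A) - c / S = c * A * (S - M) / (M * S * (A + S)) := by
    field_simp
    ring
  rw [← sub_nonneg, hgap]
  exact div_nonneg (mul_nonneg (by positivity) (sub_nonneg.2 hMS.le)) (by positivity)

lemma sum_Icc_le_tsum_nat_add {f : ℕ → ℝ} (hf : Summable f) (hf0 : ∀ j, 0 ≤ f j) (m n : ℕ) :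
    ∑ j ∈ Finset.Icc m n, f j ≤ ∑' j, f (m + j) := by
  rw [← Finset.Ico_add_one_right_eq_Icc, Finset.sum_Ico_eq_sum_range]
  refine Summable.sum_le_tsum _ (fun j _ => hf0 _) ?_
  simpa only [add_comm m] using (summable_nat_add_iff m).2 hf

section Christoffel

variable {μ ν : Measure ℂ} {n : ℕ} {z : ℂ}

lemma christoffel_le_integral {P : ℂ[X]} (hP : P.natDegree ≤ n) (hPz : P.eval z = 1) :
    christoffel μ n z ≤ ∫ t, ‖P.eval t‖ ^ 2 ∂μ :=
  csInf_le ⟨0, by rintro _ ⟨Q, -, -, rfl⟩; positivity⟩ ⟨P, hP, hPz, rfl⟩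

lemma le_christoffel {r : ℝ}
    (h : ∀ P : ℂ[X], P.natDegree ≤ n → P.eval z = 1 → r ≤ ∫ t, ‖P.eval t‖ ^ 2 ∂μ) :
    r ≤ christoffel μ n z :=
  le_csInf ⟨_, 1, by simp, by simp, rfl⟩ (by rintro _ ⟨P, hP, hPz, rfl⟩; exact h P hP hPz)

lemma christoffel_mono (hμν : μ ≤ ν)
    (hν : ∀ P : ℂ[X], Integrable (fun t => ‖P.eval t‖ ^ 2) ν) :
    christoffel μ n z ≤ christoffel ν n z :=
  le_christoffel fun P hP hPz => (christoffel_le_integral hP hPz).trans <|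
    integral_mono_measure hμν (ae_of_all _ fun _ => by positivity) (hν P)

end Christoffel

/-- The normalized partial reproducing kernel `t ↦ K_s(t, z) / K_s(z, z)`; for `s = [m, n]` this
is the test polynomial `P_n`. -/
def normalizedKernel (p : ℕ → ℂ[X]) (s : Finset ℕ) (z : ℂ) : ℂ[X] :=
  ∑ j ∈ s, ((starRingEnd ℂ) ((p j).eval z) / ((∑ i ∈ s, ‖(p i).eval z‖ ^ 2 : ℝ) : ℂ)) • p j

section NormalizedKernel

variable (p : ℕ → ℂ[X]) (s : Finset ℕ) (z : ℂ)

lemma sum_norm_normalizedKernel_coeff_sq :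
    ∑ j ∈ s, ‖(starRingEnd ℂ) ((p j).eval z) / ((∑ i ∈ s, ‖(p i).eval z‖ ^ 2 : ℝ) : ℂ)‖ ^ 2
      = (∑ i ∈ s, ‖(p i).eval z‖ ^ 2)⁻¹ := by
  have hS : 0 ≤ ∑ i ∈ s, ‖(p i).eval z‖ ^ 2 := by positivity
  simp only [norm_div, Complex.norm_conj, Complex.norm_real, Real.norm_of_nonneg hS, div_pow,
    ← Finset.sum_div]
  rw [sq, div_self_mul_self']

lemma natDegree_normalizedKernel_le {n : ℕ} (hs : ∀ j ∈ s, (p j).natDegree ≤ n) :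
    (normalizedKernel p s z).natDegree ≤ n :=
  natDegree_sum_le_of_forall_le _ _ fun j hj => (natDegree_smul_le _ _).trans (hs j hj)

lemma eval_normalizedKernel_self (hS : ∑ i ∈ s, ‖(p i).eval z‖ ^ 2 ≠ 0) :
    (normalizedKernel p s z).eval z = 1 := by
  simp only [normalizedKernel, eval_finsetSum, eval_smul, smul_eq_mul, div_mul_eq_mul_div,
    mul_comm ((starRingEnd ℂ) _), Complex.mul_conj', ← Finset.sum_div]
  push_cast
  exact div_self (by exact_mod_cast hS)

lemma norm_eval_normalizedKernel_sq_le (t : ℂ) :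
    ‖(normalizedKernel p s z).eval t‖ ^ 2
      ≤ (∑ i ∈ s, ‖(p i).eval z‖ ^ 2)⁻¹ * ∑ j ∈ s, ‖(p j).eval t‖ ^ 2 := by
  rw [← sum_norm_normalizedKernel_coeff_sq]
  simpa only [normalizedKernel, eval_finsetSum, eval_smul, smul_eq_mul]
    using norm_sum_mul_sq_le s _ _

end NormalizedKernel

namespace ONP

variable {μ : Measure ℂ} {p : ℕ → ℂ[X]}

lemma ne_zero (hp : ONP μ p) (j : ℕ) : p j ≠ 0 := fun h => by
  simpa [h] using (hp.2.1 j).1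

lemma exists_eq_sum_smul (hp : ONP μ p) {n : ℕ} {P : ℂ[X]} (hP : P.natDegree ≤ n) :
    ∃ c : ℕ → ℂ, ∑ j ∈ Finset.range (n + 1), c j • p j = P := by
  let S : Sequence ℂ := ⟨p, fun j => by rw [degree_eq_natDegree (hp.ne_zero j), hp.1 j]⟩
  have hspan := S.span_degreeLT (m := n + 1) fun j _ =>
    (leadingCoeff_ne_zero.2 (hp.ne_zero j)).isUnit
  rw [← Finset.coe_range] at hspan
  refine (Submodule.mem_span_image_finset_iff_exists_fun' ℂ).1 ?_
  rw [hspan, mem_degreeLT]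
  exact degree_le_natDegree.trans_lt (by exact_mod_cast Nat.lt_succ_of_le hP)

variable [IsFiniteMeasureOnCompacts μ]

lemma integral_norm_eval_sum_smul_sq (hp : ONP μ p) (hμ : IsCompact (msupp μ))
    (s : Finset ℕ) (c : ℕ → ℂ) :
    ∫ t, ‖(∑ j ∈ s, c j • p j).eval t‖ ^ 2 ∂μ = ∑ j ∈ s, ‖c j‖ ^ 2 := by
  have hint : ∀ i j, Integrable (fun t => (p i).eval t * (starRingEnd ℂ) ((p j).eval t)) μ :=
    fun i j => Continuous.integrable_of_isCompact_msupp hμ (by fun_prop)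
  apply Complex.ofReal_injective
  calc ((∫ t, ‖(∑ j ∈ s, c j • p j).eval t‖ ^ 2 ∂μ : ℝ) : ℂ)
      = ∫ t, ∑ i ∈ s, ∑ j ∈ s,
          c i * (starRingEnd ℂ) (c j) * ((p i).eval t * (starRingEnd ℂ) ((p j).eval t)) ∂μ := by
        rw [← integral_complex_ofReal]
        congr 1
        ext t
        simp only [eval_finsetSum, eval_smul, smul_eq_mul, Complex.ofReal_pow,
          ← Complex.mul_conj', map_sum, Finset.sum_mul_sum, map_mul, mul_mul_mul_comm]
    _ = ∑ i ∈ s, ∑ j ∈ s, c i * (starRingEnd ℂ) (c j) * if i = j then 1 else 0 := by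
        rw [integral_finsetSum _ fun i _ => integrable_finsetSum _ fun j _ => (hint i j).const_mul _]
        refine Finset.sum_congr rfl fun i _ => ?_
        rw [integral_finsetSum _ fun j _ => (hint i j).const_mul _]
        simp only [integral_const_mul, hp.2.2]
    _ = ((∑ j ∈ s, ‖c j‖ ^ 2 : ℝ) : ℂ) := by
        simp [Complex.mul_conj']

lemma inv_sum_norm_sq_le_christoffel (hp : ONP μ p) (hμ : IsCompact (msupp μ)) (n : ℕ) (z : ℂ) :
    (∑ j ∈ Finset.range (n + 1), ‖(p j).eval z‖ ^ 2)⁻¹ ≤ christoffel μ n z := by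
  refine le_christoffel fun P hP hPz => ?_
  obtain ⟨c, rfl⟩ := hp.exists_eq_sum_smul hP
  rw [hp.integral_norm_eval_sum_smul_sq hμ]
  have hCS := norm_sum_mul_sq_le (Finset.range (n + 1)) c fun j => (p j).eval z
  simp only [eval_finsetSum, eval_smul, smul_eq_mul] at hPz
  rw [hPz, norm_one, one_pow] at hCS
  rw [inv_le_iff_one_le_mul₀ (pos_of_mul_pos_right (one_pos.trans_le hCS) (by positivity))]
  exact hCS

lemma integral_norm_normalizedKernel_sq (hp : ONP μ p) (hμ : IsCompact (msupp μ))
    (s : Finset ℕ) (z : ℂ) :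
    ∫ t, ‖(normalizedKernel p s z).eval t‖ ^ 2 ∂μ = (∑ i ∈ s, ‖(p i).eval z‖ ^ 2)⁻¹ := by
  rw [normalizedKernel, hp.integral_norm_eval_sum_smul_sq hμ, sum_norm_normalizedKernel_coeff_sq]

lemma christoffel_add_le {ν : Measure ℂ} [IsFiniteMeasureOnCompacts ν] (hp : ONP μ p)
    (hμ : IsCompact (msupp μ)) (hν : IsCompact (msupp ν)) {n : ℕ} {s : Finset ℕ}
    (hs : ∀ j ∈ s, j ≤ n) {z : ℂ} (hS : 0 < ∑ i ∈ s, ‖(p i).eval z‖ ^ 2) :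
    christoffel (μ + ν) n z
      ≤ (1 + ∑ j ∈ s, ∫ t, ‖(p j).eval t‖ ^ 2 ∂ν) / ∑ i ∈ s, ‖(p i).eval z‖ ^ 2 := by
  set S := ∑ i ∈ s, ‖(p i).eval z‖ ^ 2
  set Q := normalizedKernel p s z
  have hintμ {f : ℂ → ℝ} (hf : Continuous f) : Integrable f μ := hf.integrable_of_isCompact_msupp hμ
  have hintν {f : ℂ → ℝ} (hf : Continuous f) : Integrable f ν := hf.integrable_of_isCompact_msupp hν
  have hQν : ∫ t, ‖Q.eval t‖ ^ 2 ∂ν ≤ S⁻¹ * ∑ j ∈ s, ∫ t, ‖(p j).eval t‖ ^ 2 ∂ν := by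
    rw [← integral_finsetSum _ fun j _ => hintν (by fun_prop), ← integral_const_mul]
    exact integral_mono (hintν (by fun_prop)) (hintν (by fun_prop))
      (norm_eval_normalizedKernel_sq_le p s z)
  calc christoffel (μ + ν) n z ≤ ∫ t, ‖Q.eval t‖ ^ 2 ∂(μ + ν) :=
        christoffel_le_integral
          (natDegree_normalizedKernel_le p s z fun j hj => (hp.1 j).trans_le (hs j hj))
          (eval_normalizedKernel_self p s z hS.ne')
    _ = S⁻¹ + ∫ t, ‖Q.eval t‖ ^ 2 ∂ν := by
        rw [integral_add_measure (hintμ (by fun_prop)) (hintν (by fun_prop)),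
          hp.integral_norm_normalizedKernel_sq hμ]
    _ ≤ S⁻¹ + S⁻¹ * ∑ j ∈ s, ∫ t, ‖(p j).eval t‖ ^ 2 ∂ν := by gcongr
    _ = _ := by field_simp

end ONP

theorem stmt_15_general (μ0 μ1 μ2 : Measure ℂ) [IsFiniteMeasure μ1] [IsFiniteMeasure μ2]
    (hsum : μ0 = μ1 + μ2)
    (h0c : IsCompact (msupp μ0))
    (p : ℕ → Polynomial ℂ) (hp : ONP μ1 p)
    (hsummable : Summable (fun j : ℕ => ∫ z, ‖(p j).eval z‖ ^ 2 ∂μ2))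
    (m n : ℕ) (z : ℂ) (M : ℝ) (hM : 0 < M)
    (hlow : M < ∑ j ∈ Finset.Icc m n, ‖(p j).eval z‖ ^ 2)
    (ε : ℝ) (hε : ε = ∑' j : ℕ, ∫ w, ‖(p (m + j)).eval w‖ ^ 2 ∂μ2) :
    christoffel μ1 n z ≤ christoffel μ0 n z ∧
    christoffel μ0 n z ≤ christoffel μ1 n z *
      (1 + ε + ((1 + ε) / M) * ∑ j ∈ Finset.range m, ‖(p j).eval z‖ ^ 2) := by
  subst hsum
  have h1c := isCompact_msupp_of_le h0c (Measure.le_add_right le_rfl)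
  have h2c := isCompact_msupp_of_le h0c (Measure.le_add_left le_rfl)
  set A := ∑ j ∈ Finset.range m, ‖(p j).eval z‖ ^ 2
  set S := ∑ j ∈ Finset.Icc m n, ‖(p j).eval z‖ ^ 2
  have hS : 0 < S := hM.trans hlow
  have hmn : m ≤ n := Finset.nonempty_Icc.1 (Finset.nonempty_of_sum_ne_zero hS.ne')
  have hlower : (A + S)⁻¹ ≤ christoffel μ1 n z := by
    convert hp.inv_sum_norm_sq_le_christoffel h1c n z using 2
    rw [← Finset.sum_range_add_sum_Ico _ (by omega : m ≤ n + 1), Finset.Ico_add_one_right_eq_Icc]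
  have htail : ∑ j ∈ Finset.Icc m n, ∫ t, ‖(p j).eval t‖ ^ 2 ∂μ2 ≤ ε :=
    hε ▸ sum_Icc_le_tsum_nat_add hsummable (fun _ => by positivity) m n
  have hε0 : 0 ≤ ε := hε ▸ tsum_nonneg fun _ => by positivity
  refine ⟨christoffel_mono (Measure.le_add_right le_rfl) fun P =>
    Continuous.integrable_of_isCompact_msupp h0c (by fun_prop), ?_⟩
  calc christoffel (μ1 + μ2) n z
      ≤ (1 + ∑ j ∈ Finset.Icc m n, ∫ t, ‖(p j).eval t‖ ^ 2 ∂μ2) / S :=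
        hp.christoffel_add_le h1c h2c (fun j hj => (Finset.mem_Icc.1 hj).2) hS
    _ ≤ (1 + ε) / S := by gcongr
    _ ≤ (A + S)⁻¹ * (1 + ε + ((1 + ε) / M) * A) :=
        div_le_inv_add_mul_of_lt (by positivity) (by linarith) hM hlow
    _ ≤ christoffel μ1 n z * (1 + ε + ((1 + ε) / M) * A) := by gcongr

/-- Comparison of the Christoffel functions of `μ₀ = μ₁ + μ₂` and `μ₁`:
`λ_n(μ₁,z) ≤ λ_n(μ₀,z) ≤ λ_n(μ₁,z)(1 + ε_m + ((1+ε_m)/M) ∑_{j<m} |p_j(μ₁,z)|²)`. -/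
theorem stmt_15 (μ0 μ1 μ2 : Measure ℂ) [IsFiniteMeasure μ1] [IsFiniteMeasure μ2]
    (hsum : μ0 = μ1 + μ2) (hle : μ1 ≤ μ0)
    (h0c : IsCompact (msupp μ0)) (h0i : (msupp μ0).Infinite)
    (h1c : IsCompact (msupp μ1)) (h1i : (msupp μ1).Infinite)
    (p : ℕ → Polynomial ℂ) (hp : ONP μ1 p)
    (hsummable : Summable (fun j : ℕ => ∫ z, ‖(p j).eval z‖ ^ 2 ∂μ2))
    (m n : ℕ) (hmn : m < n) (z : ℂ) (M : ℝ) (hM : 0 < M)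
    (hlow : M < ∑ j ∈ Finset.Icc m n, ‖(p j).eval z‖ ^ 2)
    (ε : ℝ) (hε : ε = ∑' j : ℕ, ∫ w, ‖(p (m + j)).eval w‖ ^ 2 ∂μ2) :
    christoffel μ1 n z ≤ christoffel μ0 n z ∧
    christoffel μ0 n z ≤ christoffel μ1 n z *
      (1 + ε + ((1 + ε) / M) * ∑ j ∈ Finset.range m, ‖(p j).eval z‖ ^ 2) :=
  stmt_15_general μ0 μ1 μ2 hsum h0c p hp hsummable m n z M hM hlow ε hε
end
end

section
/- If μ₀ is a PS perturbation of μ₁ such that in a neighborhood of infinity p_n(μ₁, z)/p_{n+1}(μ₁, z) → f(z) for some analytic function f, then also p_n(μ₀, z)/p_{n+1}(μ₀, z) → f(z) in a (possibly smaller) neighborhood of infinity. -/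
open MeasureTheory Polynomial Filter

noncomputable section

/-!
Expand `p₁ₙ` in the orthonormal system `(p₀ₖ)` of `L²(μ₀)`. Its top coefficient is
`κₙ = ‖lc p₁ₙ‖ / ‖lc p₀ₙ‖ ≥ 1`, since leading coefficients can only shrink when the measure grows,
and Parseval gives `κₙ² + ∑_{k<n} |bₖ|² = ‖p₁ₙ‖²_{L²(μ₀)} = 1 + ‖p₁ₙ‖²_{L²(μ₂)}`; hence `κₙ → 1`
and the lower part `p₁ₙ - κₙ p₀ₙ` has coefficient norm at most `‖p₁ₙ‖_{L²(μ₂)} → 0`.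

In place of Fejér's theorem we use an elementary growth bound: if `μ₀` lives on `‖z‖ ≤ M`, then
`z p₀ₖ = ∑_{j ≤ k+1} cⱼ p₀ⱼ` with `∑ |cⱼ|² ≤ M²`, which for `‖z‖ > 4M` forces
`|p₀,ₖ₊₁(z)| > 2 |p₀ₖ(z)|`, so `∑_{k<n} |p₀ₖ(z)|² ≤ |p₀ₙ(z)|²`. Cauchy–Schwarz then gives
`p₁ₙ(z) / p₀ₙ(z) → 1`, and the ratio asymptotics transfer through
`p₀ₙ / p₀ₙ₊₁ = (p₀ₙ / p₁ₙ) (p₁ₙ / p₁ₙ₊₁) (p₁ₙ₊₁ / p₀ₙ₊₁)`.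
-/

open scoped Topology ComplexConjugate
open Finset

theorem measure_compl_msupp (μ : Measure ℂ) : μ (msupp μ)ᶜ = 0 := by
  refine measure_null_of_locally_null _ fun z hz => ?_
  obtain ⟨U, hU, hU0⟩ : ∃ U ∈ 𝓝 z, μ U = 0 := by simpa [msupp] using hz
  exact ⟨U, nhdsWithin_le_nhds hU, hU0⟩

theorem exists_pos_ae_norm_le_of_isCompact_msupp {μ : Measure ℂ} (h : IsCompact (msupp μ)) :
    ∃ M, 0 < M ∧ ∀ᵐ z ∂μ, ‖z‖ ≤ M := by
  obtain ⟨M, hM, hle⟩ := h.isBounded.exists_pos_norm_le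
  exact ⟨M, hM, (ae_iff.2 (measure_compl_msupp μ)).mono hle⟩

theorem integrable_of_ae_norm_le {μ : Measure ℂ} [IsFiniteMeasure μ] {M : ℝ}
    (hae : ∀ᵐ z ∂μ, ‖z‖ ≤ M) {E : Type*} [NormedAddCommGroup E] {g : ℂ → E}
    (hg : Continuous g) : Integrable g μ := by
  obtain ⟨C, hC⟩ := (isCompact_closedBall (0 : ℂ) M).exists_bound_of_continuousOn hg.continuousOn
  exact .of_bound hg.aestronglyMeasurable C
    (hae.mono fun z hz => hC z (mem_closedBall_zero_iff.2 hz))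

theorem norm_sum_mul_le_sqrt_mul_sqrt {ι : Type*} (s : Finset ι) (u v : ι → ℂ) :
    ‖∑ i ∈ s, u i * v i‖ ≤ √(∑ i ∈ s, ‖u i‖ ^ 2) * √(∑ i ∈ s, ‖v i‖ ^ 2) :=
  (norm_sum_le _ _).trans <| by
    simpa only [norm_mul] using Real.sum_mul_le_sqrt_mul_sqrt s (‖u ·‖) (‖v ·‖)

theorem pos_and_sum_sq_le_sq_of_mul_le {A : ℕ → ℝ} {M t : ℝ} (hM : 0 < M) (ht : 4 * M < t)
    (hA0 : 0 < A 0) (hA : ∀ k, t * A k ≤ M * A (k + 1) + M * √(∑ j ∈ range (k + 1), A j ^ 2)) :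
    ∀ n, 0 < A n ∧ ∑ j ∈ range n, A j ^ 2 ≤ A n ^ 2 := by
  intro n
  induction n with
  | zero => exact ⟨hA0, by simpa using sq_nonneg (A 0)⟩
  | succ k ih =>
    obtain ⟨hpos, hsum⟩ := ih
    have hsqrt : √(∑ j ∈ range (k + 1), A j ^ 2) ≤ 2 * A k := by
      rw [Real.sqrt_le_iff, sum_range_succ]
      constructor <;> nlinarith
    have hdouble : 2 * A k < A (k + 1) := by
      have := hA k
      nlinarith [mul_le_mul_of_nonneg_left hsqrt hM.le]
    rw [sum_range_succ]
    constructor <;> nlinarith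

theorem tendsto_div_succ_of_tendsto_div_one {𝕜 : Type*} [NormedField 𝕜] {a b : ℕ → 𝕜} {L : 𝕜}
    (hab : Tendsto (fun n => a n / b n) atTop (𝓝 1))
    (ha : Tendsto (fun n => a n / a (n + 1)) atTop (𝓝 L)) :
    Tendsto (fun n => b n / b (n + 1)) atTop (𝓝 L) := by
  have hne : ∀ᶠ n in atTop, a n / b n ≠ 0 := hab.eventually_ne one_ne_zero
  have hprod := ((hab.inv₀ one_ne_zero).mul ha).mul (hab.comp (tendsto_add_atTop_nat 1))
  rw [inv_one, one_mul, mul_one] at hprod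
  refine hprod.congr' ?_
  filter_upwards [hne, (tendsto_add_atTop_nat 1).eventually hne] with n h h'
  obtain ⟨ha0, hb0⟩ := div_ne_zero_iff.1 h
  obtain ⟨ha1, hb1⟩ := div_ne_zero_iff.1 h'
  simp only [Function.comp_apply]
  field_simp

theorem Polynomial.Sequence.exists_eq_sum_smul {K : Type*} [Field K] (S : Sequence K)
    {P : K[X]} {n : ℕ} (hP : P.natDegree ≤ n) :
    ∃ b : ℕ → K, P = ∑ k ∈ range (n + 1), b k • S k := by
  have hmem : P ∈ Submodule.span K (S '' Set.Iic n) := by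
    rw [S.span_degreeLE fun i _ => (leadingCoeff_ne_zero.2 (S.ne_zero i)).isUnit]
    exact mem_degreeLE.2 (degree_le_of_natDegree_le hP)
  obtain ⟨l, hl, rfl⟩ := (Finsupp.mem_span_image_iff_linearCombination K).1 hmem
  refine ⟨l, ?_⟩
  rw [Finsupp.linearCombination_apply, Finsupp.sum_of_support_subset _ _ _ (by simp)]
  intro k hk
  simpa [Nat.lt_succ_iff] using hl hk

theorem Polynomial.Sequence.coeff_sum_smul {K : Type*} [Field K] (S : Sequence K) (b : ℕ → K)
    (n : ℕ) : (∑ k ∈ range (n + 1), b k • S k).coeff n = b n * (S n).leadingCoeff := by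
  rw [finsetSum_coeff, sum_range_succ, sum_eq_zero fun k hk => ?_, zero_add, coeff_smul,
    smul_eq_mul, leadingCoeff, S.natDegree_eq]
  rw [coeff_smul, coeff_eq_zero_of_natDegree_lt (by simpa using hk), smul_zero]

namespace ONP

variable {μ : Measure ℂ} {p : ℕ → ℂ[X]}

theorem leadingCoeff_eq_norm (hp : ONP μ p) (n : ℕ) :
    (p n).leadingCoeff = (‖(p n).leadingCoeff‖ : ℂ) := by
  obtain ⟨hre, him⟩ := hp.2.1 n
  apply Complex.ext <;> simp [Complex.norm_eq_sqrt_sq_add_sq, him, Real.sqrt_sq hre.le]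

theorem leadingCoeff_ne_zero (hp : ONP μ p) (n : ℕ) : (p n).leadingCoeff ≠ 0 := fun h => by
  simpa [h] using (hp.2.1 n).1

theorem degree_eq (hp : ONP μ p) (n : ℕ) : (p n).degree = n := by
  rw [degree_eq_natDegree (Polynomial.leadingCoeff_ne_zero.1 (hp.leadingCoeff_ne_zero n)), hp.1 n]

theorem eval_zero_ne_zero (hp : ONP μ p) (z : ℂ) : (p 0).eval z ≠ 0 := by
  rw [eq_C_of_natDegree_eq_zero (hp.1 0), eval_C]
  simpa [leadingCoeff, hp.1 0] using hp.leadingCoeff_ne_zero 0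

theorem integral_norm_eval_sq (hp : ONP μ p) (n : ℕ) : ∫ z, ‖(p n).eval z‖ ^ 2 ∂μ = 1 := by
  apply Complex.ofReal_injective
  simpa [← integral_complex_ofReal, Complex.mul_conj'] using hp.2.2 n n

variable [IsFiniteMeasure μ] {M : ℝ}

theorem integral_norm_eval_sum_sq (hae : ∀ᵐ z ∂μ, ‖z‖ ≤ M) (hp : ONP μ p) (s : Finset ℕ)
    (b : ℕ → ℂ) : ∫ z, ‖(∑ k ∈ s, b k • p k).eval z‖ ^ 2 ∂μ = ∑ k ∈ s, ‖b k‖ ^ 2 := by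
  have hint : ∀ k j, Integrable (fun z => b k * conj (b j) *
      ((p k).eval z * conj ((p j).eval z))) μ :=
    fun k j => integrable_of_ae_norm_le hae (by fun_prop)
  have hexpand : ∀ z, ((‖(∑ k ∈ s, b k • p k).eval z‖ ^ 2 : ℝ) : ℂ) =
      ∑ k ∈ s, ∑ j ∈ s, b k * conj (b j) * ((p k).eval z * conj ((p j).eval z)) := by
    intro z
    rw [Complex.ofReal_pow, ← Complex.mul_conj', eval_finsetSum, map_sum, sum_mul_sum]
    simp only [eval_smul, smul_eq_mul, map_mul]
    exact sum_congr rfl fun k _ => sum_congr rfl fun j _ => by ring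
  apply Complex.ofReal_injective
  rw [← integral_complex_ofReal, funext hexpand, integral_finsetSum _ fun k _ =>
    integrable_finsetSum _ fun j _ => hint k j]
  simp only [integral_finsetSum _ fun j _ => hint _ j, integral_const_mul, hp.2.2]
  simp [Complex.mul_conj']

theorem exists_expansion (hae : ∀ᵐ z ∂μ, ‖z‖ ≤ M) (hp : ONP μ p) {P : ℂ[X]} {n : ℕ}
    (hP : P.natDegree ≤ n) :
    ∃ b : ℕ → ℂ, (∀ z, P.eval z = ∑ k ∈ range (n + 1), b k * (p k).eval z) ∧
      b n = P.coeff n / (p n).leadingCoeff ∧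
      ∫ z, ‖P.eval z‖ ^ 2 ∂μ = ∑ k ∈ range (n + 1), ‖b k‖ ^ 2 := by
  let S : Sequence ℂ := ⟨p, hp.degree_eq⟩
  obtain ⟨b, rfl⟩ := S.exists_eq_sum_smul hP
  refine ⟨b, fun z => by simp [eval_finsetSum, S], ?_, integral_norm_eval_sum_sq hae hp _ b⟩
  rw [S.coeff_sum_smul, mul_div_cancel_right₀ _ (hp.leadingCoeff_ne_zero n)]

theorem norm_mul_eval_le (hae : ∀ᵐ z ∂μ, ‖z‖ ≤ M) (hM : 0 ≤ M) (hp : ONP μ p) (k : ℕ) (z : ℂ) :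
    ‖z‖ * ‖(p k).eval z‖ ≤
      M * ‖(p (k + 1)).eval z‖ + M * √(∑ j ∈ range (k + 1), ‖(p j).eval z‖ ^ 2) := by
  have hdeg : (X * p k).natDegree ≤ k + 1 := by
    rw [natDegree_mul X_ne_zero (Polynomial.leadingCoeff_ne_zero.1 (hp.leadingCoeff_ne_zero k)),
      natDegree_X, hp.1 k, add_comm]
  obtain ⟨b, hb, -, hpars⟩ := exists_expansion hae hp hdeg
  have hbound : ∑ j ∈ range (k + 2), ‖b j‖ ^ 2 ≤ M ^ 2 :=
    calc ∑ j ∈ range (k + 2), ‖b j‖ ^ 2 = ∫ w, ‖w‖ ^ 2 * ‖(p k).eval w‖ ^ 2 ∂μ := by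
          simp [← hpars, mul_pow]
      _ ≤ ∫ w, M ^ 2 * ‖(p k).eval w‖ ^ 2 ∂μ := by
          refine integral_mono_ae (integrable_of_ae_norm_le hae (by fun_prop))
            (integrable_of_ae_norm_le hae (by fun_prop)) (hae.mono fun w hw => ?_)
          dsimp only
          gcongr
      _ = M ^ 2 := by
          rw [integral_const_mul, hp.integral_norm_eval_sq, mul_one]
  have htop : ‖b (k + 1)‖ ≤ M := by
    refine pow_le_pow_iff_left₀ (norm_nonneg _) hM two_ne_zero |>.1 <|
      (single_le_sum (fun j _ => sq_nonneg ‖b j‖) (self_mem_range_succ (k + 1))).trans hbound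
  have hlow : √(∑ j ∈ range (k + 1), ‖b j‖ ^ 2) ≤ M := by
    refine Real.sqrt_le_iff.2 ⟨hM, (sum_le_sum_of_subset_of_nonneg ?_ fun j _ _ => ?_).trans hbound⟩
    · exact range_subset_range.2 (by omega)
    · positivity
  calc ‖z‖ * ‖(p k).eval z‖
      = ‖b (k + 1) * (p (k + 1)).eval z + ∑ j ∈ range (k + 1), b j * (p j).eval z‖ := by
        rw [← norm_mul, ← add_comm, ← sum_range_succ, ← hb]; simp
    _ ≤ M * ‖(p (k + 1)).eval z‖ + M * √(∑ j ∈ range (k + 1), ‖(p j).eval z‖ ^ 2) := by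
        refine (norm_add_le _ _).trans (add_le_add ?_ ?_)
        · rw [norm_mul]; gcongr
        · exact (norm_sum_mul_le_sqrt_mul_sqrt _ _ _).trans (by gcongr)

theorem pos_and_sum_sq_le_sq (hae : ∀ᵐ z ∂μ, ‖z‖ ≤ M) (hM : 0 < M) (hp : ONP μ p) {z : ℂ}
    (hz : 4 * M < ‖z‖) (n : ℕ) :
    0 < ‖(p n).eval z‖ ∧ ∑ j ∈ range n, ‖(p j).eval z‖ ^ 2 ≤ ‖(p n).eval z‖ ^ 2 :=
  pos_and_sum_sq_le_sq_of_mul_le (A := fun n => ‖(p n).eval z‖) hM hz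
    (norm_pos_iff.2 (hp.eval_zero_ne_zero z)) (norm_mul_eval_le hae hM.le hp · z) n

theorem norm_leadingCoeff_le_of_le (hae : ∀ᵐ z ∂μ, ‖z‖ ≤ M) (hp : ONP μ p) {ν : Measure ℂ}
    (hνμ : ν ≤ μ) {q : ℕ → ℂ[X]} (hq : ONP ν q) (n : ℕ) :
    ‖(p n).leadingCoeff‖ ≤ ‖(q n).leadingCoeff‖ := by
  have : IsFiniteMeasure ν := isFiniteMeasure_of_le μ hνμ
  obtain ⟨b, -, hbn, hpars⟩ := exists_expansion (ae_mono hνμ hae) hq (hp.1 n).le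
  have hbn_le : ‖b n‖ ^ 2 ≤ 1 :=
    calc ‖b n‖ ^ 2 ≤ ∑ k ∈ range (n + 1), ‖b k‖ ^ 2 :=
          single_le_sum (fun k _ => sq_nonneg ‖b k‖) (self_mem_range_succ n)
      _ = ∫ z, ‖(p n).eval z‖ ^ 2 ∂ν := hpars.symm
      _ ≤ ∫ z, ‖(p n).eval z‖ ^ 2 ∂μ :=
          integral_mono_measure hνμ (.of_forall fun _ => by positivity)
            (integrable_of_ae_norm_le hae (by fun_prop))
      _ = 1 := hp.integral_norm_eval_sq n
  have hcoeff : (p n).coeff n = (p n).leadingCoeff := by rw [leadingCoeff, hp.1 n]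
  rw [hbn, hcoeff, norm_div] at hbn_le
  rwa [pow_le_one_iff_of_nonneg (by positivity) two_ne_zero,
    div_le_one (norm_pos_iff.2 (hq.leadingCoeff_ne_zero n))] at hbn_le

end ONP

section Perturbation

variable {μ₁ μ₂ : Measure ℂ} [IsFiniteMeasure μ₁] [IsFiniteMeasure μ₂] {M : ℝ}
  {p₀ p₁ : ℕ → ℂ[X]}

theorem ONP.exists_eval_sub_eq_sum_of_add (hae : ∀ᵐ z ∂(μ₁ + μ₂), ‖z‖ ≤ M)
    (hp₀ : ONP (μ₁ + μ₂) p₀) (hp₁ : ONP μ₁ p₁) (n : ℕ) :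
    ∃ b : ℕ → ℂ, (∀ z, (p₁ n).eval z -
        (‖(p₁ n).leadingCoeff‖ / ‖(p₀ n).leadingCoeff‖ : ℝ) * (p₀ n).eval z =
          ∑ k ∈ range n, b k * (p₀ k).eval z) ∧
      (‖(p₁ n).leadingCoeff‖ / ‖(p₀ n).leadingCoeff‖) ^ 2 + ∑ k ∈ range n, ‖b k‖ ^ 2 =
        1 + ∫ z, ‖(p₁ n).eval z‖ ^ 2 ∂μ₂ := by
  obtain ⟨b, hb, hbn, hpars⟩ := hp₀.exists_expansion hae (hp₁.1 n).le
  have hbn' : b n = (‖(p₁ n).leadingCoeff‖ / ‖(p₀ n).leadingCoeff‖ : ℝ) := by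
    have hcoeff : (p₁ n).coeff n = (p₁ n).leadingCoeff := by rw [leadingCoeff, hp₁.1 n]
    rw [hbn, hcoeff, Complex.ofReal_div, ← hp₁.leadingCoeff_eq_norm,
      ← hp₀.leadingCoeff_eq_norm]
  refine ⟨b, fun z => by rw [hb, sum_range_succ, hbn']; ring, ?_⟩
  rw [← hp₁.integral_norm_eval_sq n, ← integral_add_measure
    (integrable_of_ae_norm_le (ae_mono (Measure.le_add_right le_rfl) hae) (by fun_prop))
    (integrable_of_ae_norm_le (ae_mono (Measure.le_add_left le_rfl) hae) (by fun_prop)),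
    hpars, sum_range_succ, hbn', Complex.norm_real, Real.norm_eq_abs, sq_abs, add_comm]

theorem ONP.tendsto_eval_div_eval_of_add (hae : ∀ᵐ z ∂(μ₁ + μ₂), ‖z‖ ≤ M) (hM : 0 < M)
    (hp₀ : ONP (μ₁ + μ₂) p₀) (hp₁ : ONP μ₁ p₁)
    (hPS : Tendsto (fun n => ∫ z, ‖(p₁ n).eval z‖ ^ 2 ∂μ₂) atTop (𝓝 0)) {z : ℂ}
    (hz : 4 * M < ‖z‖) :
    Tendsto (fun n => (p₁ n).eval z / (p₀ n).eval z) atTop (𝓝 1) := by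
  set ε := fun n => ∫ z, ‖(p₁ n).eval z‖ ^ 2 ∂μ₂
  set κ := fun n => ‖(p₁ n).leadingCoeff‖ / ‖(p₀ n).leadingCoeff‖
  have hκ : ∀ n, 1 ≤ κ n := fun n =>
    (one_le_div (norm_pos_iff.2 (hp₀.leadingCoeff_ne_zero n))).2 <|
      hp₀.norm_leadingCoeff_le_of_le hae (Measure.le_add_right le_rfl) hp₁ n
  have hestimate : ∀ n, κ n ^ 2 ≤ 1 + ε n ∧
      ‖(p₁ n).eval z / (p₀ n).eval z - 1‖ ≤ √(ε n) + (κ n - 1) := by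
    intro n
    obtain ⟨b, hb, hpars⟩ := hp₀.exists_eval_sub_eq_sum_of_add hae hp₁ n
    obtain ⟨hpos, hsum⟩ := hp₀.pos_and_sum_sq_le_sq hae hM hz n
    have htail : ∑ k ∈ range n, ‖b k‖ ^ 2 ≤ ε n := by nlinarith [hκ n]
    have hdiff : ‖(p₁ n).eval z - (κ n : ℂ) * (p₀ n).eval z‖ ≤ √(ε n) * ‖(p₀ n).eval z‖ := by
      rw [hb]
      exact (norm_sum_mul_le_sqrt_mul_sqrt _ _ _).trans <| mul_le_mul (Real.sqrt_le_sqrt htail)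
        (Real.sqrt_le_iff.2 ⟨norm_nonneg _, hsum⟩) (Real.sqrt_nonneg _) (Real.sqrt_nonneg _)
    refine ⟨by nlinarith [sum_nonneg fun k (_ : k ∈ range n) => sq_nonneg ‖b k‖], ?_⟩
    have hne : (p₀ n).eval z ≠ 0 := norm_pos_iff.1 hpos
    calc ‖(p₁ n).eval z / (p₀ n).eval z - 1‖
        = ‖((p₁ n).eval z - (κ n : ℂ) * (p₀ n).eval z) / (p₀ n).eval z + ((κ n : ℂ) - 1)‖ := by
          congr 1; field_simp; ring
      _ ≤ √(ε n) + (κ n - 1) := by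
          refine (norm_add_le _ _).trans (add_le_add ?_ (le_of_eq ?_))
          · rwa [norm_div, div_le_iff₀ hpos]
          · rw [← Complex.ofReal_one, ← Complex.ofReal_sub, Complex.norm_real, Real.norm_eq_abs,
              abs_of_nonneg (sub_nonneg.2 (hκ n))]
  have hκlim : Tendsto κ atTop (𝓝 1) := by
    refine tendsto_of_tendsto_of_tendsto_of_le_of_le tendsto_const_nhds
      (by simpa using tendsto_const_nhds.add hPS) hκ fun n => ?_
    nlinarith [hκ n, (hestimate n).1]
  rw [tendsto_iff_norm_sub_tendsto_zero]
  refine squeeze_zero (fun n => norm_nonneg _) (fun n => (hestimate n).2) ?_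
  simpa using (Real.continuous_sqrt.tendsto 0 |>.comp hPS).add (hκlim.sub_const 1)

end Perturbation

theorem stmt_16_general (μ0 μ1 μ2 : Measure ℂ) [IsFiniteMeasure μ1] [IsFiniteMeasure μ2]
    (hsum : μ0 = μ1 + μ2)
    (h0c : IsCompact (msupp μ0))
    (p0 p1 : ℕ → Polynomial ℂ) (hp0 : ONP μ0 p0) (hp1 : ONP μ1 p1)
    (hPS : Tendsto (fun n => ∫ z, ‖(p1 n).eval z‖ ^ 2 ∂μ2) atTop (nhds 0))
    (f : ℂ → ℂ) (R : ℝ)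
    (hratio : ∀ z : ℂ, R < ‖z‖ →
      Tendsto (fun n => (p1 n).eval z / (p1 (n + 1)).eval z) atTop (nhds (f z))) :
    ∃ R' : ℝ, R ≤ R' ∧ ∀ z : ℂ, R' < ‖z‖ →
      Tendsto (fun n => (p0 n).eval z / (p0 (n + 1)).eval z) atTop (nhds (f z)) := by
  subst hsum
  obtain ⟨M, hM, hae⟩ := exists_pos_ae_norm_le_of_isCompact_msupp h0c
  refine ⟨max R (4 * M), le_max_left _ _, fun z hz => ?_⟩
  exact tendsto_div_succ_of_tendsto_div_one
    (hp0.tendsto_eval_div_eval_of_add hae hM hp1 hPS ((le_max_right _ _).trans_lt hz))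
    (hratio z ((le_max_left _ _).trans_lt hz))

/-- The class Ratio(f) is invariant under PS perturbations: if `p_n(μ₁,z)/p_{n+1}(μ₁,z) → f(z)`
in a neighborhood of infinity, the same holds for `μ₀` in a possibly smaller neighborhood. -/
theorem stmt_16 (μ0 μ1 μ2 : Measure ℂ) [IsFiniteMeasure μ1] [IsFiniteMeasure μ2]
    (hsum : μ0 = μ1 + μ2) (hμ2 : μ2 ≠ 0)
    (h0c : IsCompact (msupp μ0)) (h0i : (msupp μ0).Infinite)
    (h1c : IsCompact (msupp μ1)) (h1i : (msupp μ1).Infinite)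
    (p0 p1 : ℕ → Polynomial ℂ) (hp0 : ONP μ0 p0) (hp1 : ONP μ1 p1)
    (hPS : Tendsto (fun n => ∫ z, ‖(p1 n).eval z‖ ^ 2 ∂μ2) atTop (nhds 0))
    (f : ℂ → ℂ) (R : ℝ)
    (hf : AnalyticOn ℂ f {z : ℂ | R < ‖z‖})
    (hratio : ∀ z : ℂ, R < ‖z‖ →
      Tendsto (fun n => (p1 n).eval z / (p1 (n + 1)).eval z) atTop (nhds (f z))) :
    ∃ R' : ℝ, R ≤ R' ∧ ∀ z : ℂ, R' < ‖z‖ →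
      Tendsto (fun n => (p0 n).eval z / (p0 (n + 1)).eval z) atTop (nhds (f z)) :=
  stmt_16_general μ0 μ1 μ2 hsum h0c p0 p1 hp0 hp1 hPS f R hratio
end
end
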